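/- arXiv:2302.07858 — 8 statements merged into one kernel-verified Lean document; each statement's English description precedes it below -/
import Mathlib

section
/- For all complex numbers a and x, (x^2 + 2ax - 2a^2)^5 + (i x^2 - 2ax + 2i a^2)^5 = (x^2 - 2ax - 2a^2)^5 + (i x^2 + 2ax + 2i a^2)^5. -/
/-! Set `u = x² - 2a²`, `v = 2ax`, `w = i(x² + 2a²)`. The two sides differ by the odd part in `v`
of `(u + v)⁵ - (w + v)⁵`, which is `10 v (u² - w²)(u² + w² + 2v²)`, and `u² + w² = -8a²x² = -2v²`. -/

theorem add_pow_five_add_sub_pow_five_eq_of_sq_add_sq {R : Type*} [CommRing R] {u v w : R}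
    (h : u ^ 2 + w ^ 2 + 2 * v ^ 2 = 0) :
    (u + v) ^ 5 + (w - v) ^ 5 = (u - v) ^ 5 + (w + v) ^ 5 := by
  linear_combination 10 * v * (u ^ 2 - w ^ 2) * h

theorem stmt_0 (a x : ℂ) :
    (x^2 + 2*a*x - 2*a^2)^5 + (Complex.I*x^2 - 2*a*x + 2*Complex.I*a^2)^5 =
    (x^2 - 2*a*x - 2*a^2)^5 + (Complex.I*x^2 + 2*a*x + 2*Complex.I*a^2)^5 := by
  have key : (x ^ 2 - 2 * a ^ 2) ^ 2 + (Complex.I * (x ^ 2 + 2 * a ^ 2)) ^ 2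
      + 2 * (2 * a * x) ^ 2 = 0 := by
    linear_combination (x ^ 2 + 2 * a ^ 2) ^ 2 * Complex.I_sq
  linear_combination add_pow_five_add_sub_pow_five_eq_of_sq_add_sq key
end

section
/- The function g(x) = (x^2 + 2ax - 2a^2)^5 + (i x^2 - 2ax + 2i a^2)^5, viewed as a polynomial in x over the Gaussian integers (or complex numbers), is an even function: g(x) = g(-x) for all x. -/
/-!
With `u = x² - 2a²`, `v = i(x² + 2a²)` and `t = 2ax`, the two summands of `g x` are `(u + t)⁵` and
`(v - t)⁵`, and `x ↦ -x` flips the sign of `t` only. The odd part in `t` of `(u + t)⁵ + (v - t)⁵`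
is `5t(u² - v²)(u² + v² + 2t²)`, and `u² + v² + 2t² = 0` because `i² = -1`.
-/

theorem add_pow_five_add_sub_pow_five_eq {R : Type*} [CommRing R] {u v t : R}
    (h : u ^ 2 + v ^ 2 + 2 * t ^ 2 = 0) :
    (u + t) ^ 5 + (v - t) ^ 5 = (u - t) ^ 5 + (v + t) ^ 5 := by
  linear_combination 10 * t * (u ^ 2 - v ^ 2) * h

theorem stmt_1 (a : ℂ) (g : ℂ → ℂ)
    (hg : ∀ x, g x = (x^2 + 2*a*x - 2*a^2)^5 + (Complex.I*x^2 - 2*a*x + 2*Complex.I*a^2)^5) :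
    ∀ x, g x = g (-x) := by
  intro x
  have key : (x ^ 2 - 2 * a ^ 2) ^ 2 + (Complex.I * (x ^ 2 + 2 * a ^ 2)) ^ 2
      + 2 * (2 * a * x) ^ 2 = 0 := by
    linear_combination (x ^ 2 + 2 * a ^ 2) ^ 2 * Complex.I_sq
  rw [hg, hg]
  linear_combination add_pow_five_add_sub_pow_five_eq key
end

section
/- Let F : ℕ → ℤ satisfy F 0 = 0, F 1 = 1, F (n+2) = -2 F (n+1) + 2 F n. Then for all n, as real numbers: F(n+1)^2 = (2^n / 6) * ((2+√3)^{n+1} + (2-√3)^{n+1} + 2*(-1)^n). -/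
/-! With `α, β = -1 ± √3` the roots of `x² + 2x - 2`, Binet's formula gives
`2√3 · F n = αⁿ - βⁿ`. Squaring, and using `α² = 2(2 - √3)`, `β² = 2(2 + √3)` and `αβ = -2`,
yields the identity. -/

section Lucas

variable {R : Type*} [CommRing R] (u : ℕ → R) (α β : R)

/-- Binet's formula for the Lucas sequence `U(α + β, αβ)`, cleared of the denominator `α - β`. -/
theorem sub_mul_eq_pow_sub_pow_of_lucas (h0 : u 0 = 0) (h1 : u 1 = 1)
    (hrec : ∀ n, u (n + 2) = (α + β) * u (n + 1) - α * β * u n) :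
    ∀ n, (α - β) * u n = α ^ n - β ^ n
  | 0 => by simp [h0]
  | 1 => by simp [h1]
  | n + 2 => by
    have ih₀ := sub_mul_eq_pow_sub_pow_of_lucas h0 h1 hrec n
    have ih₁ := sub_mul_eq_pow_sub_pow_of_lucas h0 h1 hrec (n + 1)
    rw [hrec]
    linear_combination (α + β) * ih₁ - α * β * ih₀

theorem sub_sq_mul_sq_eq_of_lucas (h0 : u 0 = 0) (h1 : u 1 = 1)
    (hrec : ∀ n, u (n + 2) = (α + β) * u (n + 1) - α * β * u n) (n : ℕ) :
    (α - β) ^ 2 * u n ^ 2 = (α ^ 2) ^ n + (β ^ 2) ^ n - 2 * (α * β) ^ n := by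
  rw [← mul_pow, sub_mul_eq_pow_sub_pow_of_lucas u α β h0 h1 hrec]
  ring

end Lucas

theorem stmt_4 (F : ℕ → ℤ) (h0 : F 0 = 0) (h1 : F 1 = 1)
    (hrec : ∀ n, F (n+2) = -2 * F (n+1) + 2 * F n) :
    ∀ n : ℕ, ((F (n+1) : ℝ))^2 =
      (2^n / 6) * ((2 + Real.sqrt 3)^(n+1) + (2 - Real.sqrt 3)^(n+1) + 2 * (-1)^n) := by
  intro n
  have hs : Real.sqrt 3 ^ 2 = 3 := Real.sq_sqrt (by norm_num)
  set α : ℝ := -1 + Real.sqrt 3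
  set β : ℝ := -1 - Real.sqrt 3
  have hsum : α + β = -2 := by ring
  have hprod : α * β = -2 := by linear_combination -hs
  have hα : α ^ 2 = 2 * (2 - Real.sqrt 3) := by linear_combination hs
  have hβ : β ^ 2 = 2 * (2 + Real.sqrt 3) := by linear_combination hs
  have hdiff : (α - β) ^ 2 = 12 := by linear_combination 4 * hs
  have hsq := sub_sq_mul_sq_eq_of_lucas (fun n ↦ (F n : ℝ)) α β
    (by simp [h0]) (by simp [h1]) (fun n ↦ by rw [hsum, hprod]; push_cast [hrec]; ring) (n + 1)
  rw [hdiff, hα, hβ, hprod, mul_pow, mul_pow, neg_pow, pow_succ, pow_succ (-1 : ℝ)] at hsq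
  linear_combination hsq / 12
end

section
/- Let F : ℕ → ℤ satisfy F 0 = 0, F 1 = 1, F (n+2) = -2 F (n+1) + 2 F n, and define Gaussian integers A_n = F(n+1)^2 - 2 F(n+1) F(n) - 2 F(n)^2, B_n = i F(n+1)^2 + 2 F(n+1) F(n) + 2i F(n)^2, C_n = i F(n+1)^2 - 2 F(n+1) F(n) + 2i F(n)^2. Then for all n, A_n^5 + B_n^5 = C_n^5 + 2^{5n} * (-1)^n. -/
/-!
Put `x = F (n+1)`, `y = F n`, `p = x² - 2y²`, `v = 2xy` and `w = i (x² + 2y²)`, so that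
`A = p - v`, `B = w + v`, `C = w - v`, and `w² + p² + 2v² = 0`. Under that relation the odd parts
in `v` of `(p + v)⁵ - (p - v)⁵` and `(w + v)⁵ - (w - v)⁵` agree, so `A⁵ + B⁵ = C⁵ + (p + v)⁵`.
Finally `p + v = x² + 2xy - 2y²` is multiplied by `-2` at each step of the recurrence, so it
equals `(-2)ⁿ`.
-/

theorem pow_five_sub_add_pow_five_add {R : Type*} [CommRing R] {p v w : R}
    (h : w ^ 2 + p ^ 2 + 2 * v ^ 2 = 0) :
    (p - v) ^ 5 + (w + v) ^ 5 = (w - v) ^ 5 + (p + v) ^ 5 := by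
  linear_combination (10 * v * (w ^ 2 - p ^ 2)) * h

theorem sq_add_two_mul_sub_two_sq_eq_neg_two_pow (F : ℕ → ℤ)
    (hrec : ∀ n, F (n + 2) = -2 * F (n + 1) + 2 * F n) (n : ℕ) :
    F (n + 1) ^ 2 + 2 * F (n + 1) * F n - 2 * F n ^ 2
      = (-2) ^ n * (F 1 ^ 2 + 2 * F 1 * F 0 - 2 * F 0 ^ 2) := by
  induction n with
  | zero => simp
  | succ k ih =>
    rw [hrec k, pow_succ]
    linear_combination (-2 : ℤ) * ih

theorem neg_two_pow_pow_five {R : Type*} [CommRing R] (n : ℕ) :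
    ((-2 : R) ^ n) ^ 5 = 2 ^ (5 * n) * (-1) ^ n := by
  rw [← pow_mul, mul_comm n 5, pow_mul, pow_mul, Odd.neg_pow (by decide), neg_eq_neg_one_mul,
    mul_pow, mul_comm]

theorem GaussianInt.sqrtd_sq : (Zsqrtd.sqrtd : GaussianInt) ^ 2 = -1 := by
  rw [sq, Zsqrtd.dmuld, Int.cast_neg, Int.cast_one]

theorem stmt_7 (F : ℕ → ℤ) (h0 : F 0 = 0) (h1 : F 1 = 1)
    (hrec : ∀ n, F (n+2) = -2 * F (n+1) + 2 * F n)
    (A B C : ℕ → GaussianInt)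
    (hA : ∀ n, A n = (F (n+1) : GaussianInt)^2 - 2 * (F (n+1) : GaussianInt) * (F n : GaussianInt) - 2 * (F n : GaussianInt)^2)
    (hB : ∀ n, B n = Zsqrtd.sqrtd * (F (n+1) : GaussianInt)^2 + 2 * (F (n+1) : GaussianInt) * (F n : GaussianInt)
        + 2 * Zsqrtd.sqrtd * (F n : GaussianInt)^2)
    (hC : ∀ n, C n = Zsqrtd.sqrtd * (F (n+1) : GaussianInt)^2 - 2 * (F (n+1) : GaussianInt) * (F n : GaussianInt)
        + 2 * Zsqrtd.sqrtd * (F n : GaussianInt)^2) :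
    ∀ n : ℕ, (A n)^5 + (B n)^5 = (C n)^5 + 2^(5*n) * (-1)^n := by
  intro n
  have hinv : F (n + 1) ^ 2 + 2 * F (n + 1) * F n - 2 * F n ^ 2 = (-2) ^ n := by
    rw [sq_add_two_mul_sub_two_sq_eq_neg_two_pow F hrec n, h0, h1]
    ring
  set x : GaussianInt := (F (n + 1) : GaussianInt)
  set y : GaussianInt := (F n : GaussianInt)
  have hinv' : x ^ 2 + 2 * x * y - 2 * y ^ 2 = (-2) ^ n := by
    simpa using congrArg (Int.cast : ℤ → GaussianInt) hinv
  rw [hA, hB, hC, ← neg_two_pow_pow_five, ← hinv']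
  have key := pow_five_sub_add_pow_five_add (p := x ^ 2 - 2 * y ^ 2) (v := 2 * x * y)
    (w := Zsqrtd.sqrtd * (x ^ 2 + 2 * y ^ 2))
    (by linear_combination (x ^ 2 + 2 * y ^ 2) ^ 2 * GaussianInt.sqrtd_sq)
  linear_combination key
end

section
/- Let F : ℕ → ℤ satisfy F 0 = 0, F 1 = 1, F (n+2) = -2 F (n+1) + 2 F n. Then 2^n divides F(n+1)^2 - 2 F(n+1) F(n) - 2 F(n)^2, 2^n divides 2 F(n+1) F(n), and 2^n divides F(n+1)^2 + 2 F(n)^2, for every natural number n. -/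
/-!
Write `(x, y) = (F (n+1), F n)`. The three quantities are integer combinations of
`x ^ 2`, `2 * x * y` and `2 * y ^ 2`, and one step `(x, y) ↦ (2 * (y - x), x)` of the recurrence
sends each of these three to twice an integer combination of them. Hence `2 ^ n` divides all
three after `n` steps.
-/

theorem two_mul_dvd_recurrence_step {m x y : ℤ} (hx : m ∣ x ^ 2) (hxy : m ∣ 2 * x * y)
    (hy : m ∣ 2 * y ^ 2) :
    2 * m ∣ (-2 * x + 2 * y) ^ 2 ∧ 2 * m ∣ 2 * (-2 * x + 2 * y) * x ∧ 2 * m ∣ 2 * x ^ 2 := by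
  refine ⟨?_, ?_, mul_dvd_mul_left 2 hx⟩
  · rw [show (-2 * x + 2 * y) ^ 2 = 2 * (2 * x ^ 2 - 2 * (2 * x * y) + 2 * y ^ 2) by ring]
    exact mul_dvd_mul_left 2 (((hx.mul_left 2).sub (hxy.mul_left 2)).add hy)
  · rw [show 2 * (-2 * x + 2 * y) * x = 2 * (-2 * x ^ 2 + 2 * x * y) by ring]
    exact mul_dvd_mul_left 2 ((hx.mul_left (-2)).add hxy)

theorem two_pow_dvd_of_recurrence (F : ℕ → ℤ) (hrec : ∀ n, F (n+2) = -2 * F (n+1) + 2 * F n)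
    (n : ℕ) :
    (2 ^ n : ℤ) ∣ F (n+1) ^ 2 ∧ (2 ^ n : ℤ) ∣ 2 * F (n+1) * F n ∧ (2 ^ n : ℤ) ∣ 2 * F n ^ 2 := by
  induction n with
  | zero => simp
  | succ n ih =>
    obtain ⟨hx, hxy, hy⟩ := ih
    rw [hrec n, pow_succ']
    exact two_mul_dvd_recurrence_step hx hxy hy

theorem stmt_10_general (F : ℕ → ℤ)
    (hrec : ∀ n, F (n+2) = -2 * F (n+1) + 2 * F n) :
    ∀ n : ℕ, (2^n : ℤ) ∣ (F (n+1)^2 - 2 * F (n+1) * F n - 2 * F n^2) ∧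
      (2^n : ℤ) ∣ (2 * F (n+1) * F n) ∧
      (2^n : ℤ) ∣ (F (n+1)^2 + 2 * F n^2) := by
  intro n
  obtain ⟨hx, hxy, hy⟩ := two_pow_dvd_of_recurrence F hrec n
  exact ⟨(hx.sub hxy).sub hy, hxy, hx.add hy⟩

theorem stmt_10 (F : ℕ → ℤ) (h0 : F 0 = 0) (h1 : F 1 = 1)
    (hrec : ∀ n, F (n+2) = -2 * F (n+1) + 2 * F n) :
    ∀ n : ℕ, (2^n : ℤ) ∣ (F (n+1)^2 - 2 * F (n+1) * F n - 2 * F n^2) ∧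
      (2^n : ℤ) ∣ (2 * F (n+1) * F n) ∧
      (2^n : ℤ) ∣ (F (n+1)^2 + 2 * F n^2) :=
  stmt_10_general F hrec
end

section
/- Let F : ℕ → ℤ satisfy F 0 = 0, F 1 = 1, F (n+2) = -2 F (n+1) + 2 F n. Then for all n, as real numbers: F(n+1)^2 - 2 F(n+1) F(n) - 2 F(n)^2 = (2^n / 3) * ((1+√3)(2+√3)^n + (1-√3)(2-√3)^n + (-1)^n). -/
/-!
If `α, β` are the roots of `x² + 2x - 2`, i.e. `-1 ± √3`, then Binet's formula gives
`(α - β) F n = αⁿ - βⁿ`. Substituting it into the quadratic form `x² - 2xy - 2y²` turns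
`12 (F (n+1)² - 2 F (n+1) F n - 2 F n²)` into a combination of `α²ⁿ = 2ⁿ (2 - √3)ⁿ`,
`β²ⁿ = 2ⁿ (2 + √3)ⁿ` and `(αβ)ⁿ = (-2)ⁿ`.
-/

theorem sub_mul_eq_pow_sub_pow_of_recurrence {R : Type*} [CommRing R] {p q α β : R}
    (hα : α ^ 2 = p * α + q) (hβ : β ^ 2 = p * β + q) {F : ℕ → R} (h0 : F 0 = 0)
    (h1 : F 1 = 1) (hrec : ∀ n, F (n + 2) = p * F (n + 1) + q * F n) (n : ℕ) :
    (α - β) * F n = α ^ n - β ^ n := by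
  induction n using Nat.twoStepInduction with
  | zero => simp [h0]
  | one => simp [h1]
  | more n ih ih' =>
    rw [hrec]
    linear_combination p * ih' + q * ih + β ^ n * hβ - α ^ n * hα

theorem sub_sq_mul_quadraticForm_of_binet {R : Type*} [CommRing R] {α β x y A B : R}
    (b c : R) (hx : (α - β) * x = α * A - β * B) (hy : (α - β) * y = A - B) :
    (α - β) ^ 2 * (x ^ 2 + b * x * y + c * y ^ 2) =
      (α ^ 2 + b * α + c) * A ^ 2 + (β ^ 2 + b * β + c) * B ^ 2
        - (2 * α * β + b * (α + β) + 2 * c) * (A * B) := by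
  linear_combination ((α - β) * x + α * A - β * B) * hx
    + b * ((α - β) * y * hx + (α * A - β * B) * hy)
    + c * ((α - β) * y + A - B) * hy

theorem stmt_11 (F : ℕ → ℤ) (h0 : F 0 = 0) (h1 : F 1 = 1)
    (hrec : ∀ n, F (n+2) = -2 * F (n+1) + 2 * F n) :
    ∀ n : ℕ, ((F (n+1) : ℝ))^2 - 2 * F (n+1) * F n - 2 * (F n : ℝ)^2 =
      (2^n / 3) * ((1 + Real.sqrt 3) * (2 + Real.sqrt 3)^n
        + (1 - Real.sqrt 3) * (2 - Real.sqrt 3)^n + (-1)^n) := by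
  intro n
  set s := Real.sqrt 3
  have hs : s ^ 2 = 3 := Real.sq_sqrt (by norm_num)
  have binet (m : ℕ) : (-1 + s - (-1 - s)) * (F m : ℝ) = (-1 + s) ^ m - (-1 - s) ^ m :=
    sub_mul_eq_pow_sub_pow_of_recurrence (p := -2) (q := 2)
      (by linear_combination hs) (by linear_combination hs) (F := fun m ↦ (F m : ℝ))
      (by simp [h0]) (by simp [h1]) (fun m ↦ by simp [hrec]) m
  have key := sub_sq_mul_quadraticForm_of_binet (x := (F (n + 1) : ℝ)) (y := (F n : ℝ))
    (-2) (-2) (by rw [binet, pow_succ', pow_succ']) (binet n)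
  have hα : ((-1 + s) ^ n) ^ 2 = 2 ^ n * (2 - s) ^ n := by
    rw [← pow_mul, mul_comm, pow_mul, ← mul_pow]; congr 1; linear_combination hs
  have hβ : ((-1 - s) ^ n) ^ 2 = 2 ^ n * (2 + s) ^ n := by
    rw [← pow_mul, mul_comm, pow_mul, ← mul_pow]; congr 1; linear_combination hs
  have hαβ : (-1 + s) ^ n * (-1 - s) ^ n = 2 ^ n * (-1) ^ n := by
    rw [← mul_pow, ← mul_pow]; congr 1; linear_combination -hs
  have hdisc : (-1 + s - (-1 - s)) ^ 2 = 12 := by linear_combination 4 * hs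
  have hcα : (-1 + s) ^ 2 + -2 * (-1 + s) + -2 = 4 * (1 - s) := by linear_combination hs
  have hcβ : (-1 - s) ^ 2 + -2 * (-1 - s) + -2 = 4 * (1 + s) := by linear_combination hs
  have hcαβ : 2 * (-1 + s) * (-1 - s) + -2 * (-1 + s + (-1 - s)) + 2 * -2 = -4 := by
    linear_combination -2 * hs
  rw [hdisc, hcα, hcβ, hcαβ, hα, hβ, hαβ] at key
  linear_combination key / 12
end

section
/- Define sequences of Gaussian integers a_n, b_n, c_n by a_0 = 1, b_0 = i, c_0 = i, and the recurrences a_{n+3} = 3 a_{n+2} + 3 a_{n+1} - a_n (similarly for b and c) with initial values a_0 = 1, a_1 = 3, a_2 = 13; b_0 = i, b_1 = -2+3i, b_2 = -6+11i; c_0 = i, c_1 = 2+3i, c_2 = 6+11i. Then for all n, a_n^5 + b_n^5 = c_n^5 + (-1)^n. -/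
/-!
Put `s = a n + b n - c n` and `q = a n ^ 2 + b n ^ 2 + c n ^ 2`. The linear quantity `s` solves the
recurrence, as does `(-1) ^ n` since `-1` is a characteristic root, so `s = (-1) ^ n`. The quadratic
quantity is the diagonal of the Gram kernel `a m a n + b m b n + c m c n`, which solves the
recurrence in each variable; hence the recurrence preserves the Gram matrix of three consecutive
terms as soon as it is symmetric Toeplitz with first row `(g₀, g₁, 3 g₀ + 2 g₁)`. Initially it is
`(-1, -3, -9)`, so `q = -1`. For `(x, y, z) = (a n, b n, -c n)` this gives `x + y + z = s` and
`x y + y z + z x = (s² - q) / 2 = s²`, and then Newton's identities give `x⁵ + y⁵ + z⁵ = s⁵`.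
-/

variable {R : Type*} [CommRing R]

def cubicRec (R : Type*) [CommRing R] : LinearRecurrence R := ⟨3, ![-1, 3, 3]⟩

namespace cubicRec

theorem isSolution_iff {u : ℕ → R} :
    (cubicRec R).IsSolution u ↔ ∀ n, u (n + 3) = 3 * u (n + 2) + 3 * u (n + 1) - u n := by
  refine forall_congr' fun n ↦ ?_
  show u (n + 3) = ∑ i : Fin 3, ![(-1 : R), 3, 3] i * u (n + i) ↔ _
  simp only [Fin.sum_univ_three, Matrix.cons_val, Fin.val_zero, Fin.val_one, Fin.val_two]
  constructor <;> intro h <;> linear_combination h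

theorem mem_solSpace_iff {u : ℕ → R} :
    u ∈ (cubicRec R).solSpace ↔ ∀ n, u (n + 3) = 3 * u (n + 2) + 3 * u (n + 1) - u n :=
  ((cubicRec R).is_sol_iff_mem_solSpace u).symm.trans isSolution_iff

theorem neg_one_pow_mem_solSpace : (fun n ↦ (-1 : R) ^ n) ∈ (cubicRec R).solSpace :=
  mem_solSpace_iff.2 fun n ↦ by ring

theorem eq_of_mem_solSpace {u v : ℕ → R} (hu : u ∈ (cubicRec R).solSpace)
    (hv : v ∈ (cubicRec R).solSpace) (h0 : u 0 = v 0) (h1 : u 1 = v 1) (h2 : u 2 = v 2) :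
    u = v := by
  rw [← LinearRecurrence.is_sol_iff_mem_solSpace] at hu hv
  refine ((cubicRec R).eq_iff_eqOn_range_order u v hu hv).2 fun k hk ↦ ?_
  have hk : k < 3 := Finset.mem_range.1 hk
  interval_cases k <;> assumption

end cubicRec

def IsToeplitzGram (P : ℕ → ℕ → R) (n : ℕ) : Prop :=
  P (n + 1) (n + 1) = P n n ∧ P (n + 2) (n + 2) = P n n ∧ P (n + 1) (n + 2) = P n (n + 1) ∧
    P n (n + 2) = 3 * P n n + 2 * P n (n + 1)

section Gram

variable {P : ℕ → ℕ → R}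

theorem IsToeplitzGram.succ (hsymm : ∀ m n, P m n = P n m)
    (hsol : ∀ m, P m ∈ (cubicRec R).solSpace) {n : ℕ} (h : IsToeplitzGram P n) :
    IsToeplitzGram P (n + 1) := by
  obtain ⟨h11, h22, h12, h02⟩ := h
  have hrec m := cubicRec.mem_solSpace_iff.1 (hsol m) n
  have h03 := hrec n
  have h13 := hrec (n + 1)
  have h23 := hrec (n + 2)
  have h33 := hrec (n + 3)
  rw [hsymm (n + 1) n] at h13
  rw [hsymm (n + 2) n, hsymm (n + 2) (n + 1)] at h23
  rw [hsymm (n + 3) n, hsymm (n + 3) (n + 1), hsymm (n + 3) (n + 2)] at h33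
  refine ⟨by rw [h11, h22], ?_, ?_, ?_⟩
  · rw [h33, h23, h13, h03, h02, h12, h11, h22]; ring
  · rw [h23, h02, h12, h22]; ring
  · rw [h13, h12, h11]; ring

theorem IsToeplitzGram.diag_eq (hsymm : ∀ m n, P m n = P n m)
    (hsol : ∀ m, P m ∈ (cubicRec R).solSpace) (h : IsToeplitzGram P 0) (n : ℕ) :
    P n n = P 0 0 := by
  have hgram : ∀ k, IsToeplitzGram P k := Nat.rec h fun _ ↦ succ hsymm hsol
  induction n with
  | zero => rfl
  | succ n ih => rw [(hgram n).1, ih]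

end Gram

theorem pow_five_add_pow_five_add_pow_five_of_mul {x y z : R}
    (h : x * y + y * z + z * x = (x + y + z) ^ 2) : x ^ 5 + y ^ 5 + z ^ 5 = (x + y + z) ^ 5 := by
  linear_combination 5 * ((x + y + z) * (x * y + y * z + z * x) - x * y * z) * h

theorem pow_five_add_pow_five_add_pow_five_of_sq [IsDomain R] [NeZero (2 : R)] {x y z : R}
    (h : x ^ 2 + y ^ 2 + z ^ 2 = -(x + y + z) ^ 2) : x ^ 5 + y ^ 5 + z ^ 5 = (x + y + z) ^ 5 :=
  pow_five_add_pow_five_add_pow_five_of_mul <|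
    mul_left_cancel₀ (two_ne_zero (α := R)) (by linear_combination -h)

theorem stmt_12 (a b c : ℕ → GaussianInt)
    (ha0 : a 0 = 1) (ha1 : a 1 = 3) (ha2 : a 2 = 13)
    (hb0 : b 0 = Zsqrtd.sqrtd) (hb1 : b 1 = -2 + 3 * Zsqrtd.sqrtd) (hb2 : b 2 = -6 + 11 * Zsqrtd.sqrtd)
    (hc0 : c 0 = Zsqrtd.sqrtd) (hc1 : c 1 = 2 + 3 * Zsqrtd.sqrtd) (hc2 : c 2 = 6 + 11 * Zsqrtd.sqrtd)
    (hra : ∀ n, a (n+3) = 3 * a (n+2) + 3 * a (n+1) - a n)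
    (hrb : ∀ n, b (n+3) = 3 * b (n+2) + 3 * b (n+1) - b n)
    (hrc : ∀ n, c (n+3) = 3 * c (n+2) + 3 * c (n+1) - c n) :
    ∀ n : ℕ, (a n)^5 + (b n)^5 = (c n)^5 + (-1)^n := by
  have ha := cubicRec.mem_solSpace_iff.2 hra
  have hb := cubicRec.mem_solSpace_iff.2 hrb
  have hc := cubicRec.mem_solSpace_iff.2 hrc
  have hsum : (fun n ↦ a n + b n - c n) = fun n ↦ (-1) ^ n := by
    refine cubicRec.eq_of_mem_solSpace (sub_mem (add_mem ha hb) hc)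
      cubicRec.neg_one_pow_mem_solSpace ?_ ?_ ?_ <;>
    simp only [ha0, ha1, ha2, hb0, hb1, hb2, hc0, hc1, hc2] <;> decide
  have hsq : ∀ n, a n * a n + b n * b n + c n * c n = -1 := by
    let P m n := a m * a n + b m * b n + c m * c n
    have hsol m : P m ∈ (cubicRec _).solSpace :=
      add_mem (add_mem (Submodule.smul_mem _ (a m) ha) (Submodule.smul_mem _ (b m) hb))
        (Submodule.smul_mem _ (c m) hc)
    have hgram : IsToeplitzGram P 0 := by
      simp only [IsToeplitzGram, P, ha0, ha1, ha2, hb0, hb1, hb2, hc0, hc1, hc2]; decide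
    exact fun n ↦ (IsToeplitzGram.diag_eq (fun m n ↦ by ring) hsol hgram n).trans
      (by simp only [P, ha0, hb0, hc0]; decide)
  intro n
  have hs : a n + b n + -c n = (-1) ^ n := by rw [← sub_eq_add_neg]; exact congrFun hsum n
  have hs2 : ((-1 : GaussianInt) ^ n) ^ 2 = 1 := by rw [pow_right_comm, neg_one_sq, one_pow]
  have h := pow_five_add_pow_five_add_pow_five_of_sq (x := a n) (y := b n) (z := -c n)
    (by rw [hs]; linear_combination hsq n + hs2)
  rw [hs] at h
  linear_combination h + (-1) ^ n * (((-1) ^ n) ^ 2 + 1) * hs2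
end

section
/- For complex x with |x| sufficiently small, the generating function identity holds: ∑_{n≥0} a_n x^n = (x^2 + 1) / ((x+1)(x^2 - 4x + 1)), where a_n is the integer sequence with a_0 = 1, a_1 = 3, a_2 = 13 satisfying a_{n+3} = 3 a_{n+2} + 3 a_{n+1} - a_n. -/
theorem stmt_13 (a : ℕ → ℤ) (ha0 : a 0 = 1) (ha1 : a 1 = 3) (ha2 : a 2 = 13)
    (hrec : ∀ n, a (n+3) = 3 * a (n+2) + 3 * a (n+1) - a n) :
    ∃ ε > 0, ∀ x : ℂ, ‖x‖ < ε →
      HasSum (fun n : ℕ => (a n : ℂ) * x^n)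
        ((x^2 + 1) / ((x + 1) * (x^2 - 4*x + 1))) := by
  have hbound : ∀ n, |a n| ≤ 4 ^ n := by
    have key : ∀ n, |a n| ≤ 4 ^ n ∧ |a (n+1)| ≤ 4 ^ (n+1) ∧ |a (n+2)| ≤ 4 ^ (n+2) := by
      intro n
      induction n with
      | zero => norm_num [ha0, ha1, ha2]
      | succ k ih =>
        obtain ⟨h0, h1, h2⟩ := ih
        refine ⟨h1, h2, ?_⟩
        have : k + 1 + 2 = k + 3 := by ring
        rw [this, hrec]
        calc |3 * a (k+2) + 3 * a (k+1) - a k|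
            ≤ |3 * a (k+2) + 3 * a (k+1)| + |a k| := abs_sub _ _
          _ ≤ |3 * a (k+2)| + |3 * a (k+1)| + |a k| := by
              gcongr
              exact abs_add_le _ _
          _ = 3 * |a (k+2)| + 3 * |a (k+1)| + |a k| := by
              rw [abs_mul, abs_mul]; norm_num
          _ ≤ 3 * 4 ^ (k+2) + 3 * 4 ^ (k+1) + 4 ^ k := by gcongr
          _ = 61 * 4 ^ k := by ring
          _ ≤ 64 * 4 ^ k := by
              have := pow_nonneg (by norm_num : (0:ℤ) ≤ 4) k
              linarith
          _ = 4 ^ (k+1+2) := by ring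
    exact fun n => (key n).1
  refine ⟨1/8, by norm_num, fun x hx => ?_⟩
  set f : ℕ → ℂ := fun n => (a n : ℂ) * x ^ n with hf
  have hnormx : ‖x‖ < 1/8 := hx
  have hsum : Summable f := by
    apply Summable.of_norm_bounded (g := fun n => (1/2 : ℝ) ^ n)
      (summable_geometric_of_lt_one (by norm_num) (by norm_num))
    intro n
    have h1 : ‖(a n : ℂ)‖ ≤ (4:ℝ) ^ n := by
      rw [Complex.norm_intCast]
      calc |((a n : ℝ))| = ((|a n| : ℤ) : ℝ) := by push_cast; rfl
        _ ≤ (((4:ℤ) ^ n : ℤ) : ℝ) := by exact_mod_cast hbound n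
        _ = (4:ℝ) ^ n := by push_cast; rfl
    have h2 : ‖x‖ ^ n ≤ (1/8 : ℝ) ^ n := by
      apply pow_le_pow_left₀ (norm_nonneg x) (le_of_lt hnormx)
    calc ‖f n‖ = ‖(a n : ℂ)‖ * ‖x‖ ^ n := by rw [hf]; simp [norm_mul, norm_pow]
      _ ≤ (4:ℝ) ^ n * (1/8) ^ n := by
          apply mul_le_mul h1 h2 (by positivity) (by positivity)
      _ = (1/2 : ℝ) ^ n := by
          rw [← mul_pow]; norm_num
  set S : ℂ := ∑' n, f n with hSdef
  have hS : HasSum f S := hsum.hasSum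
  -- shifted sums
  have hshift : ∀ k : ℕ, HasSum (fun n => f (n + k)) (S - ∑ i ∈ Finset.range k, f i) := by
    intro k
    rw [hasSum_nat_add_iff k]
    simpa using hS
  have h1 := hshift 1
  have h2 := hshift 2
  have h3 := hshift 3
  -- linear combination
  have hcomb : HasSum (fun n => 3 * x * f (n + 2) + 3 * x^2 * f (n + 1) - x^3 * f n)
      (3 * x * (S - ∑ i ∈ Finset.range 2, f i) + 3 * x^2 * (S - ∑ i ∈ Finset.range 1, f i)
        - x^3 * S) :=
    ((h2.mul_left (3*x)).add (h1.mul_left (3*x^2))).sub (hS.mul_left (x^3))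
  have heq : (fun n => f (n + 3)) =
      (fun n => 3 * x * f (n + 2) + 3 * x^2 * f (n + 1) - x^3 * f n) := by
    funext n
    simp only [hf]
    rw [hrec n]
    push_cast
    ring
  have h3' : HasSum (fun n => f (n + 3))
      (3 * x * (S - ∑ i ∈ Finset.range 2, f i) + 3 * x^2 * (S - ∑ i ∈ Finset.range 1, f i)
        - x^3 * S) := by
    rw [heq]; exact hcomb
  have hkey := h3.unique h3'
  have hf0 : f 0 = 1 := by simp [hf, ha0]
  have hf1 : f 1 = 3 * x := by simp [hf, ha1]
  have hf2 : f 2 = 13 * x ^ 2 := by simp [hf, ha2]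
  simp only [Finset.sum_range_succ, Finset.sum_range_zero, hf0, hf1, hf2] at hkey
  -- denominator nonzero
  have hd1 : x + 1 ≠ 0 := by
    intro h
    have : x = -1 := by linear_combination h
    rw [this] at hnormx
    norm_num at hnormx
  have hd2 : x^2 - 4*x + 1 ≠ 0 := by
    intro h
    have h1' : (1 : ℂ) = 4*x - x^2 := by linear_combination h
    have : (1:ℝ) = ‖(4*x - x^2 : ℂ)‖ := by rw [← h1']; simp
    have hle : ‖(4*x - x^2 : ℂ)‖ ≤ 4 * ‖x‖ + ‖x‖^2 := by
      calc ‖(4*x - x^2 : ℂ)‖ ≤ ‖(4*x : ℂ)‖ + ‖(x^2 : ℂ)‖ := norm_sub_le _ _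
        _ = 4 * ‖x‖ + ‖x‖^2 := by simp [norm_mul, norm_pow]
    have hnn : 0 ≤ ‖x‖ := norm_nonneg x
    nlinarith [this, hle, hnormx]
  have hdne : (x + 1) * (x^2 - 4*x + 1) ≠ 0 := mul_ne_zero hd1 hd2
  have hSval : S = (x^2 + 1) / ((x + 1) * (x^2 - 4*x + 1)) := by
    rw [eq_div_iff hdne]
    linear_combination hkey
  rw [← hSval]
  exact hS
end
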